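/- Let T̂₁ = ∏_{n≥1} H^{⊗n} be the augmentation ideal of the completed tensor algebra over a finite-dimensional ℚ-vector space H. Then the commutator subspace [T̂₁, T̂₁] is closed in the degree topology, i.e. cl[T̂₁,T̂₁] = [T̂₁,T̂₁]. -/
import Mathlib


/-- Convolution multiplication of the completed tensor algebra `T̂` on a vector space with a
fixed finite basis, elements being recorded by coefficient functions on words. -/
noncomputable def conv {m : ℕ} (a b : List (Fin m) → ℚ) : List (Fin m) → ℚ :=
  fun w => ∑ k ∈ Finset.range (w.length + 1), a (List.take k w) * b (List.drop k w)

/-- The augmentation ideal `T̂₁ = ∏_{n≥1} H^{⊗n}`: series with vanishing constant term. -/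
def T1 (m : ℕ) : Submodule ℚ (List (Fin m) → ℚ) where
  carrier := {a | a [] = 0}
  add_mem' := fun {a b} ha hb => by
    simp only [Set.mem_setOf_eq, Pi.add_apply] at *; rw [ha, hb, add_zero]
  zero_mem' := rfl
  smul_mem' := fun c a ha => by
    simp only [Set.mem_setOf_eq, Pi.smul_apply] at *; rw [ha, smul_zero]

/-- The submodule of series whose cyclic sums all vanish (and with zero constant term). -/
def Cyc (m : ℕ) : Submodule ℚ (List (Fin m) → ℚ) where
  carrier := {f | f [] = 0 ∧
    ∀ w : List (Fin m), ∑ k ∈ Finset.range w.length, f (w.rotate k) = 0}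
  add_mem' := by
    rintro a b ⟨ha0, ha⟩ ⟨hb0, hb⟩
    refine ⟨by simp [ha0, hb0], fun w => ?_⟩
    simp only [Pi.add_apply]
    rw [Finset.sum_add_distrib, ha w, hb w, add_zero]
  zero_mem' := ⟨rfl, fun w => by simp⟩
  smul_mem' := by
    rintro c a ⟨ha0, ha⟩
    refine ⟨by simp [ha0], fun w => ?_⟩
    simp only [Pi.smul_apply, smul_eq_mul]
    rw [← Finset.mul_sum, ha w, mul_zero]

lemma conv_nil {m : ℕ} (a b : List (Fin m) → ℚ) : conv a b [] = a [] * b [] := by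
  simp [conv]

/-- A commutator of two augmentation-ideal elements has vanishing cyclic sums. -/
lemma commutator_mem_cyc {m : ℕ} {x y : List (Fin m) → ℚ}
    (hx : x [] = 0) (hy : y [] = 0) : conv x y - conv y x ∈ Cyc m := by
  constructor
  · simp [conv_nil, hx]
  · intro w
    set n := w.length with hn
    have hlen : ∀ k, (w.rotate k).length = n := fun k => List.length_rotate w k
    have reduce : ∀ (a b : List (Fin m) → ℚ), a [] = 0 → b [] = 0 → ∀ k : ℕ,
        conv a b (w.rotate k)
          = ∑ j ∈ Finset.Ico 1 n, a ((w.rotate k).take j) * b ((w.rotate k).drop j) := by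
      intro a b ha hb k
      simp only [conv, hlen k]
      refine (Finset.sum_subset ?_ ?_).symm
      · intro j hj
        simp only [Finset.mem_Ico, Finset.mem_range] at *
        omega
      · intro j hj hnj
        simp only [Finset.mem_Ico, Finset.mem_range, not_and, not_lt] at hj hnj
        rcases Nat.eq_zero_or_pos j with rfl | hj1
        · simp [ha]
        · have hjn : j = n := le_antisymm (by omega) (hnj hj1)
          subst hjn
          rw [← hlen k, List.drop_length, hb, mul_zero]
    have hxy : ∀ k, (conv x y - conv y x) (w.rotate k)
        = conv x y (w.rotate k) - conv y x (w.rotate k) := fun _ => rfl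
    simp only [hxy]
    rw [Finset.sum_sub_distrib, sub_eq_zero]
    rw [Finset.sum_congr rfl (fun k _ => reduce x y hx hy k),
        Finset.sum_congr rfl (fun k _ => reduce y x hy hx k),
        ← Finset.sum_product', ← Finset.sum_product']
    refine Finset.sum_nbij' (fun p => ((p.1 + p.2) % n, n - p.2))
      (fun p => ((p.1 + p.2) % n, n - p.2)) ?_ ?_ ?_ ?_ ?_
    · rintro ⟨k, j⟩ hp
      simp only [Finset.mem_product, Finset.mem_range, Finset.mem_Ico] at *
      obtain ⟨hk, hj1, hj2⟩ := hp
      exact ⟨Nat.mod_lt _ (by omega), by omega, by omega⟩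
    · rintro ⟨k, j⟩ hp
      simp only [Finset.mem_product, Finset.mem_range, Finset.mem_Ico] at *
      obtain ⟨hk, hj1, hj2⟩ := hp
      exact ⟨Nat.mod_lt _ (by omega), by omega, by omega⟩
    · rintro ⟨k, j⟩ hp
      simp only [Finset.mem_product, Finset.mem_range, Finset.mem_Ico] at hp
      obtain ⟨hk, hj1, hj2⟩ := hp
      have h2 : n - (n - j) = j := by omega
      have h1 : ((k + j) % n + (n - j)) % n = k := by
        rw [Nat.mod_add_mod]
        have : k + j + (n - j) = k + n := by omega
        rw [this, Nat.add_mod_right, Nat.mod_eq_of_lt hk]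
      simp [h1, h2]
    · rintro ⟨k, j⟩ hp
      simp only [Finset.mem_product, Finset.mem_range, Finset.mem_Ico] at hp
      obtain ⟨hk, hj1, hj2⟩ := hp
      have h2 : n - (n - j) = j := by omega
      have h1 : ((k + j) % n + (n - j)) % n = k := by
        rw [Nat.mod_add_mod]
        have : k + j + (n - j) = k + n := by omega
        rw [this, Nat.add_mod_right, Nat.mod_eq_of_lt hk]
      simp [h1, h2]
    · rintro ⟨k, j⟩ hp
      simp only [Finset.mem_product, Finset.mem_range, Finset.mem_Ico] at hp
      obtain ⟨hk, hj1, hj2⟩ := hp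
      have e1 : w.rotate ((k + j) % n) = (w.rotate k).drop j ++ (w.rotate k).take j := by
        rw [hn, List.rotate_mod, ← List.rotate_rotate,
          List.rotate_eq_drop_append_take (by rw [hlen k]; omega)]
      have ht : (w.rotate ((k + j) % n)).take (n - j) = (w.rotate k).drop j := by
        rw [e1]; exact List.take_left' (by simp [hlen k])
      have hd : (w.rotate ((k + j) % n)).drop (n - j) = (w.rotate k).take j := by
        rw [e1]; exact List.drop_left' (by simp [hlen k])
      simp only [ht, hd]
      ring

/-- Basis element of degree one. -/
noncomputable def delta {m : ℕ} (i : Fin m) : List (Fin m) → ℚ :=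
  fun w => if w = [i] then 1 else 0

/-- Explicit preimage: weighted sum over rotations. -/
noncomputable def gfun {m : ℕ} (f : List (Fin m) → ℚ) (i : Fin m) :
    List (Fin m) → ℚ :=
  fun u => (∑ j ∈ Finset.range (u.length + 1),
      ((j : ℚ) + 1) * f ((i :: u).rotate (j + 1))) / (u.length + 1)

lemma conv_delta_left {m : ℕ} (i : Fin m) (g : List (Fin m) → ℚ)
    {w : List (Fin m)} (hw : w ≠ []) :
    conv (delta i) g w = if w.take 1 = [i] then g (w.drop 1) else 0 := by
  have hn : 1 ≤ w.length := List.length_pos_iff.2 hw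
  simp only [conv]
  rw [Finset.sum_eq_single 1]
  · simp only [delta]
    split <;> simp
  · intro k hk hk1
    simp only [Finset.mem_range] at hk
    have : w.take k ≠ [i] := by
      rcases Nat.eq_zero_or_pos k with rfl | hk0
      · simp
      · intro h
        have := congrArg List.length h
        simp only [List.length_take] at this
        simp at this
        omega
    simp [delta, this]
  · intro h
    exact absurd (Finset.mem_range.2 (by omega)) h

lemma conv_delta_right {m : ℕ} (i : Fin m) (g : List (Fin m) → ℚ)
    {w : List (Fin m)} (hw : w ≠ []) :
    conv g (delta i) w
      = if w.drop (w.length - 1) = [i] then g (w.take (w.length - 1)) else 0 := by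
  have hn : 1 ≤ w.length := List.length_pos_iff.2 hw
  simp only [conv]
  rw [Finset.sum_eq_single (w.length - 1)]
  · simp only [delta]
    split <;> simp
  · intro k hk hk1
    simp only [Finset.mem_range] at hk
    have : w.drop k ≠ [i] := by
      intro h
      have := congrArg List.length h
      simp only [List.length_drop, List.length_cons, List.length_nil] at this
      omega
    simp [delta, this]
  · intro h
    exact absurd (Finset.mem_range.2 (by omega)) h

lemma mem_cyc_eq_sum {m : ℕ} {f : List (Fin m) → ℚ} (hf : f ∈ Cyc m) :
    f = ∑ i : Fin m, (conv (delta i) (gfun f i) - conv (gfun f i) (delta i)) := by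
  obtain ⟨hf0, hfc⟩ := hf
  funext w
  rw [Finset.sum_apply]
  rcases w with _ | ⟨a, t⟩
  · simp [Pi.sub_apply, conv_nil, delta, hf0]
  · have hne : (a :: t) ≠ [] := by simp
    have e0 : ∀ i : Fin m,
        (conv (delta i) (gfun f i) - conv (gfun f i) (delta i)) (a :: t)
          = (if (a :: t).take 1 = [i] then gfun f i ((a :: t).drop 1) else 0)
            - (if (a :: t).drop t.length = [i] then gfun f i ((a :: t).take t.length) else 0) := by
      intro i
      rw [Pi.sub_apply, conv_delta_left i _ hne, conv_delta_right i _ hne]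
      rfl
    rw [Finset.sum_congr rfl fun i _ => e0 i, Finset.sum_sub_distrib]
    have htake1 : (a :: t).take 1 = [a] := rfl
    have hd : ((a :: t).drop t.length).length = 1 := by simp
    obtain ⟨c, hc⟩ := List.length_eq_one_iff.1 hd
    have e1 : ∑ i : Fin m, (if (a :: t).take 1 = [i] then gfun f i ((a :: t).drop 1) else 0)
        = gfun f a t := by
      rw [Finset.sum_eq_single a]
      · simp [htake1]
      · intro i _ hia
        rw [htake1, if_neg]
        simp only [List.cons.injEq, and_true]
        exact fun h => hia h.symm
      · intro h; exact absurd (Finset.mem_univ a) h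
    have e2 : ∑ i : Fin m,
        (if (a :: t).drop t.length = [i] then gfun f i ((a :: t).take t.length) else 0)
        = gfun f c ((a :: t).take t.length) := by
      rw [Finset.sum_eq_single c]
      · simp [hc]
      · intro i _ hic
        rw [hc, if_neg]
        simp only [List.cons.injEq, and_true]
        exact fun h => hic h.symm
      · intro h; exact absurd (Finset.mem_univ c) h
    rw [e1, e2]
    have hrot : c :: (a :: t).take t.length = (a :: t).rotate t.length := by
      rw [List.rotate_eq_drop_append_take (by simp), hc]
      rfl
    have hg1 : gfun f a t
        = (∑ j ∈ Finset.range (t.length + 1), ((j : ℚ) + 1) * f ((a :: t).rotate (j + 1)))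
          / ((t.length : ℚ) + 1) := rfl
    have hlt : ((a :: t).take t.length).length = t.length := by
      rw [List.length_take]; simp
    have hg2 : gfun f c ((a :: t).take t.length)
        = (∑ j ∈ Finset.range (t.length + 1), ((j : ℚ) + 1) * f ((a :: t).rotate j))
          / ((t.length : ℚ) + 1) := by
      simp only [gfun, hlt]
      congr 1
      refine Finset.sum_congr rfl fun j hj => ?_
      congr 1
      rw [hrot, List.rotate_rotate]
      have h5 : t.length + (j + 1) = t.length + 1 + j := by omega
      rw [h5, show (t.length + 1 : ℕ) = (a :: t).length from rfl,
        ← List.rotate_rotate, List.rotate_length]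
    rw [hg1, hg2]
    have hs : ∑ j ∈ Finset.range (t.length + 1), f ((a :: t).rotate j) = 0 := hfc (a :: t)
    set S1 := ∑ j ∈ Finset.range (t.length + 1), ((j : ℚ) + 1) * f ((a :: t).rotate (j + 1)) with hS1
    set S2 := ∑ j ∈ Finset.range (t.length + 1), ((j : ℚ) + 1) * f ((a :: t).rotate j) with hS2
    set S3 := ∑ j ∈ Finset.range (t.length + 1), (j : ℚ) * f ((a :: t).rotate j) with hS3
    have h3 : S2 = S3 + ∑ j ∈ Finset.range (t.length + 1), f ((a :: t).rotate j) := by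
      rw [hS2, hS3, ← Finset.sum_add_distrib]
      exact Finset.sum_congr rfl fun j _ => by ring
    have h4 : S1 - S3 = ((t.length : ℚ) + 1) * f (a :: t) := by
      rw [hS1, hS3, ← Finset.sum_sub_distrib]
      have h6 := Finset.sum_range_sub (fun j : ℕ => (j : ℚ) * f ((a :: t).rotate j)) (t.length + 1)
      push_cast at h6
      rw [h6, show (a :: t).rotate (t.length + 1) = a :: t from List.rotate_length (a :: t)]
      ring
    have hkey : S1 - S2 = ((t.length : ℚ) + 1) * f (a :: t) := by
      rw [h3, hs, add_zero, ← h4]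
    have hnq : ((t.length : ℚ) + 1) ≠ 0 := by positivity
    rw [div_sub_div_same, hkey, mul_comm, mul_div_assoc, div_self hnq, mul_one]

lemma span_eq_cyc (m : ℕ) :
    Submodule.span ℚ {z : List (Fin m) → ℚ |
        ∃ x ∈ T1 m, ∃ y ∈ T1 m, z = conv x y - conv y x} = Cyc m := by
  apply le_antisymm
  · rw [Submodule.span_le]
    rintro z ⟨x, hx, y, hy, rfl⟩
    exact commutator_mem_cyc hx hy
  · intro f hf
    rw [mem_cyc_eq_sum hf]
    refine Submodule.sum_mem _ fun i _ => Submodule.subset_span ?_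
    refine ⟨delta i, ?_, gfun f i, ?_, rfl⟩
    · show delta i [] = 0
      simp [delta]
    · show gfun f i [] = 0
      have h1 : f [i] = 0 := by
        have := hf.2 [i]
        simpa using this
      simp [gfun, h1]

lemma isClosed_cyc (m : ℕ) :
    @IsClosed (List (Fin m) → ℚ) (@Pi.topologicalSpace _ _ fun _ => ⊥)
      (Cyc m : Set (List (Fin m) → ℚ)) := by
  letI : TopologicalSpace ℚ := ⊥
  haveI : DiscreteTopology ℚ := ⟨rfl⟩
  haveI : ContinuousAdd ℚ := ⟨continuous_of_discreteTopology⟩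
  have heq : (Cyc m : Set (List (Fin m) → ℚ))
      = {f : List (Fin m) → ℚ | f [] = 0}
        ∩ ⋂ w : List (Fin m),
            {f : List (Fin m) → ℚ | ∑ k ∈ Finset.range w.length, f (w.rotate k) = 0} := by
    ext f
    constructor
    · rintro ⟨h0, h⟩
      exact ⟨h0, Set.mem_iInter.2 h⟩
    · rintro ⟨h0, h⟩
      exact ⟨h0, fun w => Set.mem_iInter.1 h w⟩
  rw [heq]
  refine IsClosed.inter ?_ (isClosed_iInter fun w => ?_)
  · exact isClosed_eq (continuous_apply _) continuous_const
  · exact isClosed_eq (continuous_finset_sum _ fun k _ => continuous_apply _) continuous_const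

/-- Let `T̂₁` be the augmentation ideal of the completed tensor algebra over a
finite-dimensional `ℚ`-vector space (with a fixed finite basis).  The commutator subspace
`[T̂₁,T̂₁]` is closed in the degree topology — the product topology with `ℚ` discrete, which
coincides with the topology of the filtration `T̂_d = ∏_{n≥d} H^{⊗n}` —
i.e. `cl[T̂₁,T̂₁] = [T̂₁,T̂₁]`. -/
theorem stmt6 (m : ℕ) :
    letI : TopologicalSpace ℚ := ⊥
    IsClosed ((Submodule.span ℚ {z : List (Fin m) → ℚ |
        ∃ x ∈ T1 m, ∃ y ∈ T1 m, z = conv x y - conv y x} : Submodule ℚ _) :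
      Set (List (Fin m) → ℚ)) := by
  have h : ((Submodule.span ℚ {z : List (Fin m) → ℚ |
      ∃ x ∈ T1 m, ∃ y ∈ T1 m, z = conv x y - conv y x} : Submodule ℚ _) :
        Set (List (Fin m) → ℚ)) = (Cyc m : Set (List (Fin m) → ℚ)) := by
    rw [span_eq_cyc m]
  exact h ▸ isClosed_cyc m
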